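/- For every implicative-disjunctive formula A, ⊢_id A if and only if ⊢_i τ(A), where τ is the implicative translation replacing every subformula B∨C by (B→C)→C. -/
import Mathlib


inductive IFrm where
  | atom : Nat → IFrm
  | imp : IFrm → IFrm → IFrm

inductive IDeriv : Set IFrm → IFrm → Prop where
  | hyp {K A} : A ∈ K → IDeriv K A
  | ax1 {K} (A B : IFrm) : IDeriv K (A.imp (B.imp A))
  | ax2 {K} (A B C : IFrm) : IDeriv K ((A.imp (B.imp C)).imp ((A.imp B).imp (A.imp C)))
  | ax3 {K} (A B : IFrm) : IDeriv K (((A.imp B).imp A).imp A)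
  | mp {K A B} : IDeriv K (A.imp B) → IDeriv K A → IDeriv K B

inductive IDFrm where
  | atom : Nat → IDFrm
  | imp : IDFrm → IDFrm → IDFrm
  | or : IDFrm → IDFrm → IDFrm

inductive IDDeriv : Set IDFrm → IDFrm → Prop where
  | hyp {K A} : A ∈ K → IDDeriv K A
  | ax1 {K} (A B : IDFrm) : IDDeriv K (A.imp (B.imp A))
  | ax2 {K} (A B C : IDFrm) : IDDeriv K ((A.imp (B.imp C)).imp ((A.imp B).imp (A.imp C)))
  | ax3 {K} (A B : IDFrm) : IDDeriv K (((A.imp B).imp A).imp A)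
  | ax4 {K} (A B : IDFrm) : IDDeriv K (A.imp (A.or B))
  | ax5 {K} (A B : IDFrm) : IDDeriv K (A.imp (B.or A))
  | ax6 {K} (A B C : IDFrm) : IDDeriv K ((A.imp C).imp ((B.imp C).imp ((A.or B).imp C)))
  | mp {K A B} : IDDeriv K (A.imp B) → IDDeriv K A → IDDeriv K B

def IDFrm.tau : IDFrm → IFrm
  | .atom n => .atom n
  | .imp A B => (A.tau).imp (B.tau)
  | .or A B => ((A.tau).imp (B.tau)).imp (B.tau)

/-! Auxiliary lemmas -/

theorem IDeriv.id' {K} (A : IFrm) : IDeriv K (A.imp A) :=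
  .mp (.mp (.ax2 A (A.imp A) A) (.ax1 A (A.imp A))) (.ax1 A A)

theorem IDDeriv.id' {K} (A : IDFrm) : IDDeriv K (A.imp A) :=
  .mp (.mp (.ax2 A (A.imp A) A) (.ax1 A (A.imp A))) (.ax1 A A)

theorem IDeriv.ded {K A B} (h : IDeriv (insert A K) B) : IDeriv K (A.imp B) := by
  induction h with
  | @hyp C hm =>
    rcases hm with h | h
    · subst h; exact .id' _
    · exact .mp (.ax1 _ _) (.hyp h)
  | ax1 X Y => exact .mp (.ax1 _ _) (.ax1 X Y)
  | ax2 X Y Z => exact .mp (.ax1 _ _) (.ax2 X Y Z)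
  | ax3 X Y => exact .mp (.ax1 _ _) (.ax3 X Y)
  | mp _ _ ih1 ih2 => exact .mp (.mp (.ax2 _ _ _) ih1) ih2

theorem IDDeriv.ded {K A B} (h : IDDeriv (insert A K) B) : IDDeriv K (A.imp B) := by
  induction h with
  | @hyp C hm =>
    rcases hm with h | h
    · subst h; exact .id' _
    · exact .mp (.ax1 _ _) (.hyp h)
  | ax1 X Y => exact .mp (.ax1 _ _) (.ax1 X Y)
  | ax2 X Y Z => exact .mp (.ax1 _ _) (.ax2 X Y Z)
  | ax3 X Y => exact .mp (.ax1 _ _) (.ax3 X Y)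
  | ax4 X Y => exact .mp (.ax1 _ _) (.ax4 X Y)
  | ax5 X Y => exact .mp (.ax1 _ _) (.ax5 X Y)
  | ax6 X Y Z => exact .mp (.ax1 _ _) (.ax6 X Y Z)
  | mp _ _ ih1 ih2 => exact .mp (.mp (.ax2 _ _ _) ih1) ih2

theorem hyp0 {K : Set IFrm} {A : IFrm} : IDeriv (insert A K) A := .hyp (Set.mem_insert _ _)
theorem hyp1 {K : Set IFrm} {A B : IFrm} : IDeriv (insert B (insert A K)) A :=
  .hyp (Set.mem_insert_of_mem _ (Set.mem_insert _ _))
theorem hyp2 {K : Set IFrm} {A B C : IFrm} : IDeriv (insert C (insert B (insert A K))) A :=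
  .hyp (Set.mem_insert_of_mem _ (Set.mem_insert_of_mem _ (Set.mem_insert _ _)))

theorem dhyp0 {K : Set IDFrm} {A : IDFrm} : IDDeriv (insert A K) A := .hyp (Set.mem_insert _ _)
theorem dhyp1 {K : Set IDFrm} {A B : IDFrm} : IDDeriv (insert B (insert A K)) A :=
  .hyp (Set.mem_insert_of_mem _ (Set.mem_insert _ _))
theorem dhyp2 {K : Set IDFrm} {A B C : IDFrm} : IDDeriv (insert C (insert B (insert A K))) A :=
  .hyp (Set.mem_insert_of_mem _ (Set.mem_insert_of_mem _ (Set.mem_insert _ _)))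

/-- Forward: translation of ID-derivations. -/
theorem tau_forward {K A} (h : IDDeriv K A) : IDeriv (IDFrm.tau '' K) A.tau := by
  induction h with
  | hyp hm => exact .hyp ⟨_, hm, rfl⟩
  | ax1 X Y => exact .ax1 _ _
  | ax2 X Y Z => exact .ax2 _ _ _
  | ax3 X Y => exact .ax3 _ _
  | ax4 X Y =>
    -- τA → ((τA→τB)→τB)
    exact .ded (.ded (.mp hyp0 hyp1))
  | ax5 X Y =>
    exact .ax1 _ _
  | ax6 X Y Z =>
    -- (a→c) → ((b→c) → (((a→b)→b) → c))
    set a := X.tau; set b := Y.tau; set c := Z.tau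
    apply IDeriv.ded; apply IDeriv.ded; apply IDeriv.ded
    -- hyps: a→c (2), b→c (1), (a→b)→b (0); goal c
    refine .mp (.ax3 c b) (.ded ?_)
    -- hyp c→b (0); goal c
    -- a→b : compose a→c with c→b
    have hab : IDeriv (insert (c.imp b) (insert ((a.imp b).imp b) (insert (b.imp c) (insert (a.imp c) (IDFrm.tau '' K))))) (a.imp b) :=
      .ded (.mp hyp1 (.mp (.hyp (Set.mem_insert_of_mem _ (Set.mem_insert_of_mem _ (Set.mem_insert_of_mem _ (Set.mem_insert_of_mem _ (Set.mem_insert _ _)))))) hyp0))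
    exact .mp hyp2 (.mp hyp1 hab)
  | mp _ _ ih1 ih2 => exact .mp ih1 ih2

def emb : IFrm → IDFrm
  | .atom n => .atom n
  | .imp A B => (emb A).imp (emb B)

theorem emb_deriv {K A} (h : IDeriv K A) : IDDeriv (emb '' K) (emb A) := by
  induction h with
  | hyp hm => exact .hyp ⟨_, hm, rfl⟩
  | ax1 X Y => exact .ax1 _ _
  | ax2 X Y Z => exact .ax2 _ _ _
  | ax3 X Y => exact .ax3 _ _
  | mp _ _ ih1 ih2 => exact .mp ih1 ih2

/-- In ID-logic, every formula is equivalent to (the embedding of) its translation. -/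
theorem tau_equiv (A : IDFrm) (K : Set IDFrm) :
    IDDeriv K (A.imp (emb A.tau)) ∧ IDDeriv K ((emb A.tau).imp A) := by
  induction A generalizing K with
  | atom n => exact ⟨.id' _, .id' _⟩
  | imp X Y ihX ihY =>
    constructor
    · -- (X→Y) → (τX→τY)
      apply IDDeriv.ded; apply IDDeriv.ded
      -- hyps: X→Y (1), τX (0); goal τY
      exact .mp (ihY _).1 (.mp dhyp1 (.mp (ihX _).2 dhyp0))
    · apply IDDeriv.ded; apply IDDeriv.ded
      -- hyps: τX→τY (1), X (0); goal Y
      exact .mp (ihY _).2 (.mp dhyp1 (.mp (ihX _).1 dhyp0))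
  | or X Y ihX ihY =>
    set a := emb X.tau; set b := emb Y.tau
    constructor
    · -- (X∨Y) → ((a→b)→b)
      refine .mp (.mp (.ax6 X Y _) ?_) ?_
      · -- X → ((a→b)→b)
        apply IDDeriv.ded; apply IDDeriv.ded
        exact .mp dhyp0 (.mp (ihX _).1 dhyp1)
      · -- Y → ((a→b)→b)
        apply IDDeriv.ded; apply IDDeriv.ded
        exact .mp (ihY _).1 dhyp1
    · -- ((a→b)→b) → X∨Y
      apply IDDeriv.ded
      -- hyp h: (a→b)→b (0); goal X∨Y
      refine .mp (.ax3 (X.or Y) Y) (.ded ?_)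
      -- hyp g: X∨Y→Y (0), h (1); goal X∨Y
      have hab : IDDeriv (insert ((X.or Y).imp Y) (insert ((a.imp b).imp b) K)) (a.imp b) := by
        apply IDDeriv.ded
        -- hyps: a (0), g (1), h (2); goal b
        exact .mp (ihY _).1 (.mp dhyp1 (.mp (.ax4 X Y) (.mp (ihX _).2 dhyp0)))
      exact .mp (.ax5 Y X) (.mp (ihY _).2 (.mp dhyp1 hab))

theorem stmt14 (A : IDFrm) :
    IDDeriv ∅ A ↔ IDeriv ∅ A.tau := by
  constructor
  · intro h
    have := tau_forward h
    simpa using this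
  · intro h
    have h2 := emb_deriv h
    rw [Set.image_empty] at h2
    exact .mp (tau_equiv A ∅).2 h2
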